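/- Let G be a group and let S be a nonempty proper subset of G. For every h ∈ G, the Cayley poset P(G,S) is a Cayley representation of G if and only if P(G,Sh) is a Cayley representation of G, where Sh = {sh : s ∈ S}. -/

import Mathlib

/-
Fixing minimal points and right-multiplying maximal points by `h` is an order isomorphism
`P(G,S) ≃o P(G,Sh)`, since `g⁻¹k ∈ S ↔ g⁻¹(kh) ∈ Sh`. Left and right multiplication commute,
so this isomorphism commutes with every `L(g)`, and conjugating by it carries automorphisms
of the form `L(g)` on one poset to automorphisms of the same form on the other.
-/

variable {G : Type*}

/-- The order relation of the Cayley poset `P(G,S)`: the underlying set is the disjoint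
union of two copies of `G` (`Sum.inl g` is written `g`, `Sum.inr h` is written `h'`),
with `g < h'` iff `g⁻¹ * h ∈ S`, and no other distinct elements comparable. -/
def cayleyLE [Group G] (S : Set G) : G ⊕ G → G ⊕ G → Prop
  | Sum.inl g, Sum.inl h => g = h
  | Sum.inl g, Sum.inr h => g⁻¹ * h ∈ S
  | Sum.inr _, Sum.inl _ => False
  | Sum.inr g, Sum.inr h => g = h

/-- The Cayley poset `P(G,S)` as a type synonym for `G ⊕ G`. -/
def CayleyPoset (G : Type*) [Group G] (S : Set G) : Type _ := G ⊕ G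

instance [Group G] (S : Set G) : PartialOrder (CayleyPoset G S) where
  le x y := cayleyLE S x y
  le_refl x := by cases x <;> exact rfl
  le_trans x y z hxy hyz := by
    cases x <;> cases y <;> cases z <;> simp_all [cayleyLE]
  le_antisymm x y hxy hyx := by
    cases x <;> cases y <;> simp_all [cayleyLE] <;> (subst_vars; rfl)

/-- The map `L(g)` on `P(G,S)`: `h ↦ g*h` on minimal points and `h' ↦ (g*h)'` on
maximal points. -/
def cayleyL [Group G] (g : G) : G ⊕ G → G ⊕ G
  | Sum.inl h => Sum.inl (g * h)
  | Sum.inr h => Sum.inr (g * h)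

/-- `P(G,S)` is a Cayley representation of `G` if every order automorphism of the
Cayley poset `P(G,S)` equals `L(g)` for some `g ∈ G`. -/
def IsCayleyRep (G : Type*) [Group G] (S : Set G) : Prop :=
  ∀ φ : CayleyPoset G S ≃o CayleyPoset G S,
    ∃ g : G, ∀ p : CayleyPoset G S, φ p = cayleyL g p

section

variable [Group G]

theorem mul_right_mem_image_mul_right_iff (S : Set G) (a h : G) :
    a * h ∈ (fun s => s * h) '' S ↔ a ∈ S := by
  rw [Set.image_mul_right, Set.mem_preimage, mul_inv_cancel_right]

theorem IsCayleyRep.of_orderIso {S T : Set G} (e : CayleyPoset G S ≃o CayleyPoset G T)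
    (he : ∀ (g : G) (p : CayleyPoset G S), e (cayleyL g p) = cayleyL g (e p))
    (hS : IsCayleyRep G S) : IsCayleyRep G T := by
  intro φ
  obtain ⟨g, hg⟩ := hS ((e.trans φ).trans e.symm)
  refine ⟨g, fun p => ?_⟩
  have conj := congrArg e (hg (e.symm p))
  simp only [OrderIso.trans_apply, OrderIso.apply_symm_apply] at conj
  rw [conj, he, e.apply_symm_apply]

theorem OrderIso.symm_cayleyL {S T : Set G} (e : CayleyPoset G S ≃o CayleyPoset G T)
    (he : ∀ (g : G) (p : CayleyPoset G S), e (cayleyL g p) = cayleyL g (e p))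
    (g : G) (p : CayleyPoset G T) : e.symm (cayleyL g p) = cayleyL g (e.symm p) :=
  e.injective <| (e.apply_symm_apply _).trans <|
    (congrArg (cayleyL g) (e.apply_symm_apply p)).symm.trans (he g _).symm

theorem isCayleyRep_congr {S T : Set G} (e : CayleyPoset G S ≃o CayleyPoset G T)
    (he : ∀ (g : G) (p : CayleyPoset G S), e (cayleyL g p) = cayleyL g (e p)) :
    IsCayleyRep G S ↔ IsCayleyRep G T :=
  ⟨IsCayleyRep.of_orderIso e he, IsCayleyRep.of_orderIso e.symm (e.symm_cayleyL he)⟩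

def CayleyPoset.rightTranslateIso (S : Set G) (h : G) :
    CayleyPoset G S ≃o CayleyPoset G ((fun s => s * h) '' S) where
  toFun := Sum.map id (· * h)
  invFun := Sum.map id (· * h⁻¹)
  left_inv := by rintro (a | a) <;> simp <;> rfl
  right_inv := by rintro (a | a) <;> simp <;> rfl
  map_rel_iff' := by
    rintro (a | a) (b | b)
    · rfl
    · change a⁻¹ * (b * h) ∈ (fun s => s * h) '' S ↔ a⁻¹ * b ∈ S
      rw [← mul_assoc, mul_right_mem_image_mul_right_iff]
    · rfl
    · exact mul_left_inj h

theorem CayleyPoset.rightTranslateIso_cayleyL (S : Set G) (h g : G) (p : CayleyPoset G S) :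
    rightTranslateIso S h (cayleyL g p) = cayleyL g (rightTranslateIso S h p) := by
  rcases p with a | a
  · rfl
  · exact congrArg Sum.inr (mul_assoc g a h)

end

theorem cayleyRep_iff_right_translate_general (G : Type*) [Group G] (S : Set G) (h : G) :
    IsCayleyRep G S ↔ IsCayleyRep G ((fun s => s * h) '' S) :=
  isCayleyRep_congr _ (CayleyPoset.rightTranslateIso_cayleyL S h)

/-- For a nonempty proper subset `S ⊆ G` and any `h ∈ G`, `P(G,S)` is
a Cayley representation of `G` iff `P(G, Sh)` is, where `Sh = {s*h : s ∈ S}`. -/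
theorem cayleyRep_iff_right_translate (G : Type*) [Group G] (S : Set G)
    (hne : S.Nonempty) (hproper : S ≠ Set.univ) (h : G) :
    IsCayleyRep G S ↔ IsCayleyRep G ((fun s => s * h) '' S) :=
  cayleyRep_iff_right_translate_general G S h
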